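/- Let p ≥ 1 and q ≥ 0 be integers, let β > 0 be a real number, and set α = 1/(4(p+q)β). Let x̃ : E → ℝ≥0 be capacities with x̃(e) ≥ α for every e ∈ H, let y be the induced tree-edge capacities, and let F ⊆ H. If the tree is good for F, i.e. Σ_{f ∈ M^{-1}(F)} y(f) ≤ 1/2, then the number ℓ of shattered components of Q_F satisfies ℓ ≤ 2(p+q)β, and consequently |Z_F| ≤ 2^{2(p+q)β} · k. -/

import Mathlib

open scoped Classical

/-- The edges of `H` with exactly one endpoint in `S` (the cut `δ_H(S)`).
Edges are abstract objects of type `E` with endpoint maps `g₁ g₂ : E → V`. -/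
noncomputable def cutEdges {V E : Type*} (g₁ g₂ : E → V) (H : Finset E) (S : Finset V) :
    Finset E :=
  H.filter fun e => (g₁ e ∈ S) ≠ (g₂ e ∈ S)

/-- `u` and `v` are connected by a path using only edges of `H`. -/
def ConnectedIn {V E : Type*} (g₁ g₂ : E → V) (H : Finset E) (u v : V) : Prop :=
  Relation.ReflTransGen (fun a b => ∃ e ∈ H, (g₁ e = a ∧ g₂ e = b) ∨ (g₁ e = b ∧ g₂ e = a)) u v

/-- `u` and `v` are `p`-edge-connected in `H`: for every `D ⊆ H` with `|D| ≤ p - 1`,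
`u` and `v` are connected in `H \ D`. -/
def PEdgeConnected {V E : Type*} (g₁ g₂ : E → V) (p : ℕ) (H : Finset E) (u v : V) : Prop :=
  ∀ D : Finset E, D ⊆ H → D.card ≤ p - 1 → ConnectedIn g₁ g₂ (H \ D) u v

/-- `u` and `v` are `(p,q)`-flex-connected in `H` (with unsafe edge set `Unsafe`):
for every `U ⊆ Unsafe` with `|U| ≤ q`, `u` and `v` are `p`-edge-connected in `H \ U`. -/
def FlexConnected {V E : Type*} (g₁ g₂ : E → V) (Unsafe : Finset E) (p q : ℕ)
    (H : Finset E) (u v : V) : Prop :=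
  ∀ U : Finset E, U ⊆ Unsafe → U.card ≤ q → PEdgeConnected g₁ g₂ p (H \ U) u v

/-- `(t₁, t₂ : TE → TV)` describes a (multi)graph which is a tree: it is connected and
every edge is a bridge. -/
def IsTree' {TV TE : Type*} [Fintype TE] (t₁ t₂ : TE → TV) : Prop :=
  (∀ a b : TV, ConnectedIn t₁ t₂ Finset.univ a b) ∧
    ∀ f : TE, ¬ ConnectedIn t₁ t₂ (Finset.univ \ {f}) (t₁ f) (t₂ f)

/-- `V_f`: the `M1`-images of the leaves (elements of `L`) lying in the connected component
of the tree with `f` deleted that contains the endpoint `t₁ f`. -/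
noncomputable def compVerts {V TV TE : Type*} [Fintype TE] (t₁ t₂ : TE → TV)
    (M1 : TV → V) (L : Finset TV) (f : TE) : Finset V :=
  (L.filter fun a => ConnectedIn t₁ t₂ (Finset.univ \ {f}) a (t₁ f)).image M1

/-- The capacity `y(f) = Σ_{e ∈ δ_E(V_f)} x(e)` induced on a tree edge `f` by
capacities `x` on the edges of `G`. -/
noncomputable def treeCap {V E TV TE : Type*} [Fintype E] [Fintype TE]
    (g₁ g₂ : E → V) (t₁ t₂ : TE → TV) (M1 : TV → V) (L : Finset TV)
    (x : E → NNReal) (f : TE) : NNReal :=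
  ∑ e ∈ cutEdges g₁ g₂ Finset.univ (compVerts t₁ t₂ M1 L f), x e

/-- `M^{-1}(F)`: tree edges `f` with `M2(f) ∩ F ≠ ∅`. -/
noncomputable def Minv {E TE : Type*} [Fintype TE] (M2 : TE → Finset E) (F : Finset E) :
    Finset TE :=
  Finset.univ.filter fun f => (M2 f ∩ F).Nonempty

/-- `M(E') = ⋃_{f ∈ E'} M2(f)`. -/
noncomputable def Mimg {E TE : Type*} (M2 : TE → Finset E) (E' : Finset TE) : Finset E :=
  E'.biUnion M2

/-- The connected component containing `v` of the graph on `V` with edge set `H`. -/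
noncomputable def Qcomp {V E : Type*} [Fintype V] (g₁ g₂ : E → V) (H : Finset E) (v : V) :
    Finset V :=
  Finset.univ.filter fun u => ConnectedIn g₁ g₂ H u v

/-- A vertex set `Q` is shattered (w.r.t. the tree and `M^{-1}(F)`): the leaves whose
`M1`-images lie in `Q` are not all in a single connected component of the tree with the
edges of `M^{-1}(F)` deleted. -/
def IsShattered {V E TV TE : Type*} [Fintype TE] (t₁ t₂ : TE → TV) (M1 : TV → V)
    (L : Finset TV) (M2 : TE → Finset E) (F : Finset E) (Q : Finset V) : Prop :=
  ∃ a ∈ L, ∃ b ∈ L, M1 a ∈ Q ∧ M1 b ∈ Q ∧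
    ¬ ConnectedIn t₁ t₂ (Finset.univ \ Minv M2 F) a b

/-- `Z_F`: the pairs `(A ∪ Q_{s_i}, B ∪ Q_{t_i})` over `i ∈ [k]` and pairs `(A, B)`
partitioning the union of the shattered components of `(V, H \ F)`, each shattered
component lying entirely in `A` or entirely in `B`, such that the two sets of the pair
are disjoint. -/
def ZF {V E TV TE : Type*} [Fintype V] [Fintype TE] (g₁ g₂ : E → V) (t₁ t₂ : TE → TV)
    (M1 : TV → V) (L : Finset TV) (M2 : TE → Finset E) {k : ℕ} (st : Fin k → V × V)
    (H F : Finset E) : Set (Finset V × Finset V) :=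
  { P | ∃ i : Fin k, ∃ A B : Finset V,
      Disjoint A B ∧
      A ∪ B = Finset.univ.filter
        (fun v => IsShattered t₁ t₂ M1 L M2 F (Qcomp g₁ g₂ (H \ F) v)) ∧
      (∀ v : V, IsShattered t₁ t₂ M1 L M2 F (Qcomp g₁ g₂ (H \ F) v) →
        Qcomp g₁ g₂ (H \ F) v ⊆ A ∨ Qcomp g₁ g₂ (H \ F) v ⊆ B) ∧
      P.1 = A ∪ Qcomp g₁ g₂ (H \ F) (st i).1 ∧
      P.2 = B ∪ Qcomp g₁ g₂ (H \ F) (st i).2 ∧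
      Disjoint P.1 P.2 }

/-- The number of shattered connected components of `(V, H \ F)`. -/
noncomputable def shatteredCount {V E TV TE : Type*} [Fintype V] [Fintype TE]
    (g₁ g₂ : E → V) (t₁ t₂ : TE → TV) (M1 : TV → V) (L : Finset TV)
    (M2 : TE → Finset E) (H F : Finset E) : ℕ :=
  ((Finset.univ.image fun v => Qcomp g₁ g₂ (H \ F) v).filter
    fun Q => IsShattered t₁ t₂ M1 L M2 F Q).card

/-!
Every shattered component `Q` contains leaf images `M1 a, M1 b` whose leaves are separated in
the tree by `M⁻¹(F)`. In a tree, a single edge `f ∈ M⁻¹(F)` already separates `a` from `b`, so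
`V_f` contains exactly one of `M1 a, M1 b`, and a path between them inside `Q` uses an edge of
`H \ F` in the cut `δ(V_f)`. That edge has capacity at least `α` and determines `Q`, hence
`ℓ α ≤ Σ_{f ∈ M⁻¹(F)} y(f) ≤ 1/2`. An element of `Z_F` is determined by `i` and by the set of
shattered components placed in `A`, so `|Z_F| ≤ k 2^ℓ`.
-/

section ConnectedIn

variable {V E : Type*} {g₁ g₂ : E → V} {H H' : Finset E} {u v w : V}

theorem ConnectedIn.trans (h : ConnectedIn g₁ g₂ H u v) (h' : ConnectedIn g₁ g₂ H v w) :
    ConnectedIn g₁ g₂ H u w :=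
  Relation.ReflTransGen.trans h h'

theorem ConnectedIn.symm (h : ConnectedIn g₁ g₂ H u v) : ConnectedIn g₁ g₂ H v u := by
  induction h with
  | refl => exact .refl
  | tail _ hstep ih =>
    obtain ⟨e, he, hends⟩ := hstep
    exact .head ⟨e, he, hends.symm⟩ ih

theorem ConnectedIn.mono (hH : H ⊆ H') (h : ConnectedIn g₁ g₂ H u v) :
    ConnectedIn g₁ g₂ H' u v := by
  induction h with
  | refl => exact .refl
  | tail _ hstep ih =>
    obtain ⟨e, he, hends⟩ := hstep
    exact ih.tail ⟨e, hH he, hends⟩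

theorem ConnectedIn.exists_crossing_edge (P : V → Prop) (h : ConnectedIn g₁ g₂ H u v)
    (huv : ¬ (P u ↔ P v)) :
    ∃ e ∈ H, ¬ (P (g₁ e) ↔ P (g₂ e)) ∧ ConnectedIn g₁ g₂ H u (g₁ e) := by
  induction h with
  | refl => exact absurd Iff.rfl huv
  | @tail b c hub hstep ih =>
    by_cases hPb : P u ↔ P b
    · obtain ⟨e, he, ⟨rfl, rfl⟩ | ⟨rfl, rfl⟩⟩ := hstep
      · exact ⟨e, he, fun hP => huv (hPb.trans hP), hub⟩
      · exact ⟨e, he, fun hP => huv (hPb.trans hP.symm), hub.tail ⟨e, he, .inr ⟨rfl, rfl⟩⟩⟩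
    · exact ih hPb

theorem ConnectedIn.sdiff_singleton_or (f : E) (h : ConnectedIn g₁ g₂ H u v) :
    ConnectedIn g₁ g₂ (H \ {f}) u v ∨
      (ConnectedIn g₁ g₂ (H \ {f}) u (g₁ f) ∧ ConnectedIn g₁ g₂ (H \ {f}) v (g₂ f)) ∨
      (ConnectedIn g₁ g₂ (H \ {f}) u (g₂ f) ∧ ConnectedIn g₁ g₂ (H \ {f}) v (g₁ f)) := by
  induction h with
  | refl => exact .inl .refl
  | @tail b c _ hstep ih =>
    obtain ⟨e, he, hends⟩ := hstep
    by_cases hef : e = f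
    · subst hef
      rcases hends with ⟨rfl, rfl⟩ | ⟨rfl, rfl⟩ <;>
        rcases ih with h | ⟨hb, hc⟩ | ⟨hb, hc⟩
      exacts [.inr (.inl ⟨h, .refl⟩), .inl (hb.trans hc), .inl hb,
        .inr (.inr ⟨h, .refl⟩), .inl hb, .inl (hb.trans hc)]
    · have hbc : ConnectedIn g₁ g₂ (H \ {f}) b c :=
        .single ⟨e, Finset.mem_sdiff.2 ⟨he, by simpa using hef⟩, hends⟩
      rcases ih with h | ⟨hb, hc⟩ | ⟨hb, hc⟩
      · exact .inl (h.trans hbc)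
      · exact .inr (.inl ⟨hb, hbc.symm.trans hc⟩)
      · exact .inr (.inr ⟨hb, hbc.symm.trans hc⟩)

/-- A path in `H'` through the bridge `f` would connect the two sides of `f` in `H \ {f}`. -/
theorem ConnectedIn.sdiff_singleton_of_bridge {f : E}
    (hf : ¬ ConnectedIn g₁ g₂ (H \ {f}) (g₁ f) (g₂ f)) (hH' : H' ⊆ H)
    (h' : ConnectedIn g₁ g₂ H' u v) (h : ConnectedIn g₁ g₂ (H \ {f}) u v) :
    ConnectedIn g₁ g₂ (H' \ {f}) u v := by
  have hsub : H' \ {f} ⊆ H \ {f} := Finset.sdiff_subset_sdiff hH' le_rfl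
  rcases h'.sdiff_singleton_or f with h'' | ⟨hu, hv⟩ | ⟨hu, hv⟩
  · exact h''
  · exact absurd (((hu.mono hsub).symm.trans h).trans (hv.mono hsub)) hf
  · exact absurd (((hu.mono hsub).symm.trans h).trans (hv.mono hsub)).symm hf

theorem ConnectedIn.sdiff_of_forall_bridge {D : Finset E}
    (hD : ∀ f ∈ D, ¬ ConnectedIn g₁ g₂ (H \ {f}) (g₁ f) (g₂ f))
    (h : ConnectedIn g₁ g₂ H u v) (hsep : ∀ f ∈ D, ConnectedIn g₁ g₂ (H \ {f}) u v) :
    ConnectedIn g₁ g₂ (H \ D) u v := by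
  induction D using Finset.induction_on with
  | empty => simpa using h
  | insert f D _ ih =>
    have hD' := ih (fun f' hf' => hD f' (Finset.mem_insert_of_mem hf'))
      (fun f' hf' => hsep f' (Finset.mem_insert_of_mem hf'))
    rw [Finset.sdiff_insert, ← Finset.sdiff_singleton_eq_erase]
    exact hD'.sdiff_singleton_of_bridge (hD f (Finset.mem_insert_self f D)) Finset.sdiff_subset
      (hsep f (Finset.mem_insert_self f D))

theorem ConnectedIn.sides_ne {f : E} (h : ConnectedIn g₁ g₂ H u v)
    (hf : ¬ ConnectedIn g₁ g₂ (H \ {f}) u v) :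
    ¬ (ConnectedIn g₁ g₂ (H \ {f}) u (g₁ f) ↔ ConnectedIn g₁ g₂ (H \ {f}) v (g₁ f)) := by
  rcases h.sdiff_singleton_or f with h' | ⟨hu, hv⟩ | ⟨hu, hv⟩
  · exact absurd h' hf
  · exact fun hiff => hf (hu.trans (hiff.1 hu).symm)
  · exact fun hiff => hf ((hiff.2 hv).trans hv.symm)

end ConnectedIn

section Qcomp

variable {V E : Type*} [Fintype V] {g₁ g₂ : E → V} {H : Finset E} {u v : V}

theorem mem_Qcomp : u ∈ Qcomp g₁ g₂ H v ↔ ConnectedIn g₁ g₂ H u v := by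
  simp [Qcomp]

theorem self_mem_Qcomp : v ∈ Qcomp g₁ g₂ H v :=
  mem_Qcomp.2 .refl

theorem Qcomp_eq_of_mem (h : u ∈ Qcomp g₁ g₂ H v) : Qcomp g₁ g₂ H u = Qcomp g₁ g₂ H v := by
  rw [mem_Qcomp] at h
  ext w
  simp only [mem_Qcomp]
  exact ⟨fun hw => hw.trans h, fun hw => hw.trans h.symm⟩

end Qcomp

theorem exists_subset_biUnion_eq_of_disjoint {α : Type*} {S : Finset (Finset α)}
    {A B : Finset α} (hAB : Disjoint A B) (hS : ∀ Q ∈ S, Q ⊆ A ∨ Q ⊆ B)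
    (hcover : ∀ w ∈ A ∪ B, ∃ Q ∈ S, w ∈ Q) :
    ∃ T ⊆ S, T.biUnion id = A ∧ (S \ T).biUnion id = B := by
  refine ⟨S.filter (· ⊆ A), Finset.filter_subset _ _, ?_, ?_⟩ <;> ext w <;>
    simp only [Finset.mem_biUnion, Finset.mem_sdiff, Finset.mem_filter, id]
  · refine ⟨fun ⟨Q, ⟨_, hQA⟩, hwQ⟩ => hQA hwQ, fun hw => ?_⟩
    obtain ⟨Q, hQ, hwQ⟩ := hcover w (Finset.mem_union_left _ hw)
    refine ⟨Q, ⟨hQ, (hS Q hQ).resolve_right fun hQB => ?_⟩, hwQ⟩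
    exact Finset.disjoint_left.1 hAB hw (hQB hwQ)
  · constructor
    · rintro ⟨Q, ⟨hQ, hQA⟩, hwQ⟩
      exact (hS Q hQ).resolve_left (fun h => hQA ⟨hQ, h⟩) hwQ
    · intro hw
      obtain ⟨Q, hQ, hwQ⟩ := hcover w (Finset.mem_union_right _ hw)
      refine ⟨Q, ⟨hQ, fun ⟨_, hQA⟩ => ?_⟩, hwQ⟩
      exact Finset.disjoint_left.1 hAB (hQA hwQ) hw

section Tree

variable {V E TV TE : Type*} [Fintype TE] {g₁ g₂ : E → V} {t₁ t₂ : TE → TV}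
  {M1 : TV → V} {L : Finset TV}

theorem mem_compVerts_iff (hM1 : Set.InjOn M1 L) {a : TV} (ha : a ∈ L) (f : TE) :
    M1 a ∈ compVerts t₁ t₂ M1 L f ↔ ConnectedIn t₁ t₂ (Finset.univ \ {f}) a (t₁ f) := by
  simp only [compVerts, Finset.mem_image, Finset.mem_filter]
  refine ⟨fun ⟨b, ⟨hb, hbf⟩, hba⟩ => ?_, fun h => ⟨a, ⟨ha, h⟩, rfl⟩⟩
  rwa [← hM1 (Finset.mem_coe.2 hb) (Finset.mem_coe.2 ha) hba]

theorem sum_treeCap_eq_sum_sigma [Fintype E] (x : E → NNReal) (D : Finset TE) :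
    ∑ f ∈ D, (treeCap g₁ g₂ t₁ t₂ M1 L x f : ℝ) =
      ∑ fe ∈ D.sigma fun f => cutEdges g₁ g₂ Finset.univ (compVerts t₁ t₂ M1 L f),
        (x fe.2 : ℝ) := by
  rw [Finset.sum_sigma]
  exact Finset.sum_congr rfl fun f _ => by rw [treeCap, NNReal.coe_sum]

end Tree

section Shattered

variable {V E TV TE : Type*} [Fintype V] [Fintype TE] {g₁ g₂ : E → V} {t₁ t₂ : TE → TV}
  {M1 : TV → V} {L : Finset TV} {M2 : TE → Finset E} {H F : Finset E}

noncomputable def shatteredComps (g₁ g₂ : E → V) (t₁ t₂ : TE → TV) (M1 : TV → V)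
    (L : Finset TV) (M2 : TE → Finset E) (H F : Finset E) : Finset (Finset V) :=
  (Finset.univ.image fun v => Qcomp g₁ g₂ (H \ F) v).filter
    fun Q => IsShattered t₁ t₂ M1 L M2 F Q

theorem mem_shatteredComps {Q : Finset V} :
    Q ∈ shatteredComps g₁ g₂ t₁ t₂ M1 L M2 H F ↔
      ∃ v, Qcomp g₁ g₂ (H \ F) v = Q ∧ IsShattered t₁ t₂ M1 L M2 F Q := by
  simp [shatteredComps]

theorem shatteredCount_eq_card_shatteredComps :
    shatteredCount g₁ g₂ t₁ t₂ M1 L M2 H F = (shatteredComps g₁ g₂ t₁ t₂ M1 L M2 H F).card :=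
  rfl

variable [Fintype E]

theorem IsShattered.exists_cutEdge (htree : IsTree' t₁ t₂) (hM1 : Set.InjOn M1 L)
    {H' : Finset E} {v : V} (hsh : IsShattered t₁ t₂ M1 L M2 F (Qcomp g₁ g₂ H' v)) :
    ∃ f ∈ Minv M2 F, ∃ e ∈ H',
      e ∈ cutEdges g₁ g₂ Finset.univ (compVerts t₁ t₂ M1 L f) ∧ g₁ e ∈ Qcomp g₁ g₂ H' v := by
  obtain ⟨a, ha, b, hb, haQ, hbQ, hab⟩ := hsh
  have hsep : ∃ f ∈ Minv M2 F, ¬ ConnectedIn t₁ t₂ (Finset.univ \ {f}) a b := by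
    by_contra! hsep
    exact hab ((htree.1 a b).sdiff_of_forall_bridge (fun f _ => htree.2 f) hsep)
  obtain ⟨f, hf, hfab⟩ := hsep
  have hsides : ¬ (M1 a ∈ compVerts t₁ t₂ M1 L f ↔ M1 b ∈ compVerts t₁ t₂ M1 L f) := by
    rw [mem_compVerts_iff hM1 ha, mem_compVerts_iff hM1 hb]
    exact (htree.1 a b).sides_ne hfab
  have hpath : ConnectedIn g₁ g₂ H' (M1 a) (M1 b) :=
    (mem_Qcomp.1 haQ).trans (mem_Qcomp.1 hbQ).symm
  obtain ⟨e, he, hcross, hae⟩ := hpath.exists_crossing_edge _ hsides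
  refine ⟨f, hf, e, he, ?_, mem_Qcomp.2 (hae.symm.trans (mem_Qcomp.1 haQ))⟩
  exact Finset.mem_filter.2 ⟨Finset.mem_univ e, fun h => hcross (h ▸ Iff.rfl)⟩

theorem card_shatteredComps_mul_le_sum_treeCap (htree : IsTree' t₁ t₂) (hM1 : Set.InjOn M1 L)
    {x : E → NNReal} {α : ℝ} (hα : 0 ≤ α) (hx : ∀ e ∈ H \ F, α ≤ (x e : ℝ)) :
    ((shatteredComps g₁ g₂ t₁ t₂ M1 L M2 H F).card : ℝ) * α ≤
      ∑ f ∈ Minv M2 F, (treeCap g₁ g₂ t₁ t₂ M1 L x f : ℝ) := by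
  set cuts := (Minv M2 F).sigma fun f => cutEdges g₁ g₂ Finset.univ (compVerts t₁ t₂ M1 L f)
  set W := cuts.filter fun fe : (_ : TE) × E => fe.2 ∈ H \ F
  have hsurj : Set.SurjOn (fun fe : (_ : TE) × E => Qcomp g₁ g₂ (H \ F) (g₁ fe.2)) W
      (shatteredComps g₁ g₂ t₁ t₂ M1 L M2 H F) := by
    intro Q hQ
    obtain ⟨v, rfl, hsh⟩ := mem_shatteredComps.1 hQ
    obtain ⟨f, hf, e, he, hcut, heQ⟩ := hsh.exists_cutEdge htree hM1
    exact ⟨⟨f, e⟩, Finset.mem_filter.2 ⟨Finset.mem_sigma.2 ⟨hf, hcut⟩, he⟩, Qcomp_eq_of_mem heQ⟩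
  calc ((shatteredComps g₁ g₂ t₁ t₂ M1 L M2 H F).card : ℝ) * α
      ≤ W.card * α := by gcongr; exact Finset.card_le_card_of_surjOn _ hsurj
    _ ≤ ∑ fe ∈ W, (x fe.2 : ℝ) := by
      rw [← nsmul_eq_mul]
      exact Finset.card_nsmul_le_sum _ _ _ fun fe hfe => hx _ (Finset.mem_filter.1 hfe).2
    _ ≤ ∑ fe ∈ cuts, (x fe.2 : ℝ) :=
      Finset.sum_le_sum_of_subset_of_nonneg (Finset.filter_subset _ _) fun _ _ _ => by positivity
    _ = ∑ f ∈ Minv M2 F, (treeCap g₁ g₂ t₁ t₂ M1 L x f : ℝ) :=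
      (sum_treeCap_eq_sum_sigma x _).symm

end Shattered

section ZF

variable {V E TV TE : Type*} [Fintype V] [Fintype TE] {g₁ g₂ : E → V} {t₁ t₂ : TE → TV}
  {M1 : TV → V} {L : Finset TV} {M2 : TE → Finset E} {H F : Finset E} {k : ℕ}
  {st : Fin k → V × V}

theorem exists_of_mem_ZF {P : Finset V × Finset V} (hP : P ∈ ZF g₁ g₂ t₁ t₂ M1 L M2 st H F) :
    ∃ i : Fin k, ∃ T ⊆ shatteredComps g₁ g₂ t₁ t₂ M1 L M2 H F,
      P = (T.biUnion id ∪ Qcomp g₁ g₂ (H \ F) (st i).1,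
        (shatteredComps g₁ g₂ t₁ t₂ M1 L M2 H F \ T).biUnion id ∪
          Qcomp g₁ g₂ (H \ F) (st i).2) := by
  obtain ⟨i, A, B, hAB, hunion, hcomp, hP1, hP2, -⟩ := hP
  have hS : ∀ Q ∈ shatteredComps g₁ g₂ t₁ t₂ M1 L M2 H F, Q ⊆ A ∨ Q ⊆ B := by
    intro Q hQ
    obtain ⟨v, rfl, hsh⟩ := mem_shatteredComps.1 hQ
    exact hcomp v hsh
  have hcover : ∀ w ∈ A ∪ B, ∃ Q ∈ shatteredComps g₁ g₂ t₁ t₂ M1 L M2 H F, w ∈ Q := by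
    intro w hw
    rw [hunion, Finset.mem_filter] at hw
    exact ⟨_, mem_shatteredComps.2 ⟨w, rfl, hw.2⟩, self_mem_Qcomp⟩
  obtain ⟨T, hT, hTA, hTB⟩ := exists_subset_biUnion_eq_of_disjoint hAB hS hcover
  exact ⟨i, T, hT, Prod.ext (by rw [hP1, hTA]) (by rw [hP2, hTB])⟩

theorem ncard_ZF_le :
    (ZF g₁ g₂ t₁ t₂ M1 L M2 st H F).ncard ≤
      k * 2 ^ (shatteredComps g₁ g₂ t₁ t₂ M1 L M2 H F).card := by
  set S := shatteredComps g₁ g₂ t₁ t₂ M1 L M2 H F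
  set param : Fin k × Finset (Finset V) → Finset V × Finset V := fun iT =>
    (iT.2.biUnion id ∪ Qcomp g₁ g₂ (H \ F) (st iT.1).1,
      (S \ iT.2).biUnion id ∪ Qcomp g₁ g₂ (H \ F) (st iT.1).2)
  have hsub : ZF g₁ g₂ t₁ t₂ M1 L M2 st H F ⊆ ↑((Finset.univ ×ˢ S.powerset).image param) := by
    intro P hP
    obtain ⟨i, T, hT, rfl⟩ := exists_of_mem_ZF hP
    exact Finset.mem_image.2 ⟨(i, T), Finset.mem_product.2
      ⟨Finset.mem_univ i, Finset.mem_powerset.2 hT⟩, rfl⟩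
  calc (ZF g₁ g₂ t₁ t₂ M1 L M2 st H F).ncard
      ≤ ((Finset.univ ×ˢ S.powerset).image param).card :=
        (Set.ncard_le_ncard hsub (Finset.finite_toSet _)).trans_eq (Set.ncard_coe_finset _)
    _ ≤ (Finset.univ ×ˢ S.powerset).card := Finset.card_image_le
    _ = k * 2 ^ S.card := by simp

end ZF

theorem shatteredCount_and_ZF_bound_general {V E TV TE : Type*}
    [Fintype V] [Fintype E] [Fintype TE]
    (g₁ g₂ : E → V) (t₁ t₂ : TE → TV) (htree : IsTree' t₁ t₂)
    (M1 : TV → V) (L : Finset TV) (hM1 : Set.BijOn M1 (↑L) Set.univ)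
    (M2 : TE → Finset E)
    (p q : ℕ) (hp : 1 ≤ p) (β : ℝ) (hβ : 0 < β)
    (α : ℝ) (hα : α = 1 / (4 * ((p : ℝ) + q) * β))
    (k : ℕ) (st : Fin k → V × V) (H F : Finset E)
    (x : E → NNReal) (hx : ∀ e ∈ H, α ≤ (x e : ℝ))
    (hgood : (∑ f ∈ Minv M2 F, (treeCap g₁ g₂ t₁ t₂ M1 L x f : ℝ)) ≤ 1 / 2) :
    (shatteredCount g₁ g₂ t₁ t₂ M1 L M2 H F : ℝ) ≤ 2 * ((p : ℝ) + q) * β ∧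
      ((ZF g₁ g₂ t₁ t₂ M1 L M2 st H F).ncard : ℝ) ≤
        (2 : ℝ) ^ (2 * ((p : ℝ) + q) * β) * k := by
  rw [shatteredCount_eq_card_shatteredComps]
  set ℓ := (shatteredComps g₁ g₂ t₁ t₂ M1 L M2 H F).card
  have hscale : 0 < 4 * ((p : ℝ) + q) * β := by
    have : (0 : ℝ) < p := by exact_mod_cast hp
    positivity
  have hαpos : 0 < α := hα ▸ one_div_pos.2 hscale
  have hcharge : (ℓ : ℝ) * α ≤ 1 / 2 :=
    (card_shatteredComps_mul_le_sum_treeCap htree hM1.injOn hαpos.le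
      fun e he => hx e (Finset.mem_sdiff.1 he).1).trans hgood
  have hℓ : (ℓ : ℝ) ≤ 2 * ((p : ℝ) + q) * β := by
    rw [← le_div_iff₀ hαpos, hα] at hcharge
    calc _ ≤ 1 / 2 / (1 / (4 * ((p : ℝ) + q) * β)) := hcharge
      _ = 2 * ((p : ℝ) + q) * β := by field_simp; ring
  refine ⟨hℓ, ?_⟩
  calc ((ZF g₁ g₂ t₁ t₂ M1 L M2 st H F).ncard : ℝ)
      ≤ k * (2 : ℝ) ^ ℓ := by exact_mod_cast ncard_ZF_le
    _ ≤ k * (2 : ℝ) ^ (2 * ((p : ℝ) + q) * β) := by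
      rw [← Real.rpow_natCast]
      gcongr
      exact one_le_two
    _ = _ := mul_comm _ _

/-- If the tree is good for `F ⊆ H` (i.e. `Σ_{f ∈ M⁻¹(F)} y(f) ≤ 1/2`) and every edge of
`H` has capacity at least `α = 1/(4(p+q)β)`, then the number `ℓ` of shattered components
satisfies `ℓ ≤ 2(p+q)β`, and `|Z_F| ≤ 2^{2(p+q)β} · k`. -/
theorem shatteredCount_and_ZF_bound {V E TV TE : Type*}
    [Fintype V] [Fintype E] [Fintype TE]
    (g₁ g₂ : E → V) (t₁ t₂ : TE → TV) (htree : IsTree' t₁ t₂)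
    (M1 : TV → V) (L : Finset TV) (hM1 : Set.BijOn M1 (↑L) Set.univ)
    (M2 : TE → Finset E)
    (hM2 : ∀ f : TE, ConnectedIn g₁ g₂ (M2 f) (M1 (t₁ f)) (M1 (t₂ f)))
    (p q : ℕ) (hp : 1 ≤ p) (β : ℝ) (hβ : 0 < β)
    (α : ℝ) (hα : α = 1 / (4 * ((p : ℝ) + q) * β))
    (k : ℕ) (st : Fin k → V × V) (H F : Finset E) (hFH : F ⊆ H)
    (x : E → NNReal) (hx : ∀ e ∈ H, α ≤ (x e : ℝ))
    (hgood : (∑ f ∈ Minv M2 F, (treeCap g₁ g₂ t₁ t₂ M1 L x f : ℝ)) ≤ 1 / 2) :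
    (shatteredCount g₁ g₂ t₁ t₂ M1 L M2 H F : ℝ) ≤ 2 * ((p : ℝ) + q) * β ∧
      ((ZF g₁ g₂ t₁ t₂ M1 L M2 st H F).ncard : ℝ) ≤
        (2 : ℝ) ^ (2 * ((p : ℝ) + q) * β) * k :=
  shatteredCount_and_ZF_bound_general g₁ g₂ t₁ t₂ htree M1 L hM1 M2 p q hp β hβ α hα k st H F x hx
    hgood
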